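/- For every z ∈ ℝ and every φ ∈ C([0,t];ℝ), one has Z_s(T_z(φ)) = Z_s(φ) for all 0 ≤ s ≤ t; that is, Z ∘ T_z = Z. -/

import Mathlib

open MeasureTheory ProbabilityTheory Set

/-- `A_s(φ) = ∫_0^s e^{2 φ_u} du`. -/
noncomputable def pA (φ : ℝ → ℝ) (s : ℝ) : ℝ := ∫ u in (0:ℝ)..s, Real.exp (2 * φ u)

/-- `Z_s(φ) = e^{-φ_s} A_s(φ)`. -/
noncomputable def pZ (φ : ℝ → ℝ) (s : ℝ) : ℝ := Real.exp (-(φ s)) * pA φ s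

/-- The anticipative transformation `T_z` on paths over `[0,t]`:
`T_z(φ)(s) = φ_s - log(1 + (A_s(φ)/A_t(φ)) (e^z - 1))`. -/
noncomputable def pT (t z : ℝ) (φ : ℝ → ℝ) (s : ℝ) : ℝ :=
  φ s - Real.log (1 + (pA φ s / pA φ t) * (Real.exp z - 1))

/-! Put `D_s = 1 + c A_s(φ)` with `c = (e^z - 1) / A_t(φ)`; on `[0,t]` it is a convex combination
of `1` and `e^z`, hence positive. Then `e^{2 T_z(φ)} = e^{2φ} / D²`,
which is the derivative of `A(φ) / D` because `D' = c e^{2φ}`. Hence `A_s(T_z φ) = A_s(φ) / D_s`,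
while `e^{-T_z(φ)_s} = e^{-φ_s} D_s`, and the factors `D_s` cancel in `Z_s(T_z φ)`. -/

section Primitive

open intervalIntegral

variable {f : ℝ → ℝ} {a b : ℝ}

theorem hasDerivAt_primitive_of_continuousOn_Icc (hf : ContinuousOn f (Icc a b))
    {x : ℝ} (hx : x ∈ Ioo a b) : HasDerivAt (fun u => ∫ v in a..u, f v) (f x) x :=
  integral_hasDerivAt_right
    ((hf.mono (uIcc_subset_Icc (left_mem_Icc.2 (hx.1.le.trans hx.2.le))
      (Ioo_subset_Icc_self hx))).intervalIntegrable)
    ((hf.mono Ioo_subset_Icc_self).stronglyMeasurableAtFilter isOpen_Ioo x hx)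
    (hf.continuousAt (Icc_mem_nhds hx.1 hx.2))

theorem integral_div_one_add_mul_primitive_sq (hab : a ≤ b) (hf : ContinuousOn f (Icc a b))
    (c : ℝ) (hpos : ∀ x ∈ Icc a b, 0 < 1 + c * ∫ v in a..x, f v) :
    ∫ u in a..b, f u / (1 + c * ∫ v in a..u, f v) ^ 2
      = (∫ v in a..b, f v) / (1 + c * ∫ v in a..b, f v) := by
  set G : ℝ → ℝ := fun x => ∫ v in a..x, f v
  have hG : ContinuousOn G (Icc a b) := by
    simpa [uIcc_of_le hab] using
      continuousOn_primitive_interval (μ := volume) (hf.integrableOn_Icc.mono_set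
        (uIcc_of_le hab).subset)
  have hD : ContinuousOn (fun x => 1 + c * G x) (Icc a b) := continuousOn_const.add
    (continuousOn_const.mul hG)
  have hderiv : ∀ x ∈ Ioo a b,
      HasDerivAt (fun x => G x / (1 + c * G x)) (f x / (1 + c * G x) ^ 2) x := by
    intro x hx
    have hGx : HasDerivAt G (f x) x := hasDerivAt_primitive_of_continuousOn_Icc hf hx
    have hDx := hpos x (Ioo_subset_Icc_self hx)
    refine (hGx.div ((hGx.const_mul c).const_add 1) hDx.ne').congr_deriv ?_
    field_simp
    ring
  have hint : IntervalIntegrable (fun x => f x / (1 + c * G x) ^ 2) volume a b :=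
    (hf.div (hD.pow 2) fun x hx => (pow_pos (hpos x hx) 2).ne').intervalIntegrable_of_Icc hab
  rw [integral_eq_sub_of_hasDerivAt_of_le hab (hG.div hD fun x hx => (hpos x hx).ne')
    hderiv hint]
  simp [G]

end Primitive

theorem one_add_div_mul_exp_sub_one_pos {x y : ℝ} (hx : 0 ≤ x) (hxy : x ≤ y) (z : ℝ) :
    0 < 1 + x / y * (Real.exp z - 1) := by
  have hr₀ : 0 ≤ x / y := div_nonneg hx (hx.trans hxy)
  have hr₁ : x / y ≤ 1 := div_le_one_of_le₀ hxy (hx.trans hxy)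
  nlinarith [Real.exp_pos z, mul_nonneg hr₀ (Real.exp_pos z).le]

section Transform

variable {t z : ℝ} {φ : ℝ → ℝ}

theorem pA_nonneg_le (hφ : ContinuousOn φ (Icc 0 t)) {s : ℝ} (hs : s ∈ Icc 0 t) :
    0 ≤ pA φ s ∧ pA φ s ≤ pA φ t :=
  ⟨intervalIntegral.integral_nonneg hs.1 fun _ _ => (Real.exp_pos _).le,
    intervalIntegral.integral_mono_interval le_rfl hs.1 hs.2
      (Filter.Eventually.of_forall fun _ => (Real.exp_pos _).le)
      ((Real.continuous_exp.comp_continuousOn (continuousOn_const.mul hφ)).intervalIntegrable_of_Icc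
        (hs.1.trans hs.2))⟩

theorem pT_eq_sub_log (s : ℝ) :
    pT t z φ s = φ s - Real.log (1 + (Real.exp z - 1) / pA φ t * pA φ s) := by
  rw [pT, div_mul_comm]

theorem one_add_mul_pA_pos (hφ : ContinuousOn φ (Icc 0 t)) {s : ℝ} (hs : s ∈ Icc 0 t) :
    0 < 1 + (Real.exp z - 1) / pA φ t * pA φ s := by
  obtain ⟨h₀, h₁⟩ := pA_nonneg_le hφ hs
  simpa only [div_mul_comm] using one_add_div_mul_exp_sub_one_pos h₀ h₁ z

theorem pA_pT (hφ : ContinuousOn φ (Icc 0 t)) {s : ℝ} (hs : s ∈ Icc 0 t) :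
    pA (pT t z φ) s = pA φ s / (1 + (Real.exp z - 1) / pA φ t * pA φ s) := by
  have hsub : Icc 0 s ⊆ Icc 0 t := Icc_subset_Icc le_rfl hs.2
  have hexp : ∀ u ∈ Icc 0 t, Real.exp (2 * pT t z φ u)
      = Real.exp (2 * φ u) / (1 + (Real.exp z - 1) / pA φ t * pA φ u) ^ 2 := by
    intro u hu
    rw [pT_eq_sub_log, mul_sub, Real.exp_sub, ← Real.log_rpow (one_add_mul_pA_pos hφ hu),
      Real.exp_log (Real.rpow_pos_of_pos (one_add_mul_pA_pos hφ hu) _), Real.rpow_two]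
  rw [pA, intervalIntegral.integral_congr fun u hu => hexp u (hsub (uIcc_of_le hs.1 ▸ hu))]
  exact integral_div_one_add_mul_primitive_sq hs.1
    (Real.continuous_exp.comp_continuousOn (continuousOn_const.mul (hφ.mono hsub))) _
    fun u hu => one_add_mul_pA_pos hφ (hsub hu)

end Transform

theorem pZ_pT_general (t : ℝ) (z : ℝ) (φ : ℝ → ℝ)
    (hφ : ContinuousOn φ (Icc 0 t)) :
    ∀ s ∈ Icc (0:ℝ) t, pZ (pT t z φ) s = pZ φ s := by
  intro s hs
  have hD := one_add_mul_pA_pos (z := z) hφ hs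
  rw [pZ, pZ, pA_pT hφ hs, pT_eq_sub_log, neg_sub, Real.exp_sub, Real.exp_log hD, Real.exp_neg]
  generalize 1 + (Real.exp z - 1) / pA φ t * pA φ s = D at hD ⊢
  field_simp

/-- For every `z ∈ ℝ` and `φ ∈ C([0,t];ℝ)`, `Z_s(T_z(φ)) = Z_s(φ)` for all `0 ≤ s ≤ t`;
that is, `Z ∘ T_z = Z`. -/
theorem pZ_pT (t : ℝ) (ht : 0 < t) (z : ℝ) (φ : ℝ → ℝ)
    (hφ : ContinuousOn φ (Icc 0 t)) :
    ∀ s ∈ Icc (0:ℝ) t, pZ (pT t z φ) s = pZ φ s :=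
  pZ_pT_general t z φ hφ
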